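/- Let W ∈ ℝᴹ be a random vector and ε ∈ {±1}ᴹ a random sign vector independent of W with εⱼ = +1 for j ∈ S and εⱼ uniform on {±1}, independent across j, for j ∈ H = [M] \ S. Suppose that for every subset T ⊆ H, (W₁, ..., W_M) has the same distribution as (W₁·ε₁(T), ..., W_M·ε_M(T)), where εⱼ(T) = -1 if j ∈ T and +1 otherwise. Define pⱼ = 1/2 if Wⱼ > 0 and pⱼ = 1 if Wⱼ < 0. Then conditional on the magnitudes |W₁|, ..., |W_M| and on (Wⱼ)_{j∈S}, the null p-values (pⱼ)_{j ∈ H, Wⱼ ≠ 0} are i.i.d. with P(pⱼ = 1/2) = 1/2. -/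
import Mathlib


open MeasureTheory
open scoped Classical

/-- The knockoff p-value: `p = 1/2` if `W > 0`, `p = 1` if `W < 0` (and if `W = 0`). -/
noncomputable def pval (x : ℝ) : ℝ := if 0 < x then 1/2 else 1

lemma pval_eq_half_iff (x : ℝ) : pval x = 1/2 ↔ 0 < x := by
  unfold pval; split <;> simp_all

/-- If `W` is sign-flip symmetric over the null set `H` (i.e. `W =_d W ⊙ ε(T)` for
every `T ⊆ H`), then conditionally on the magnitudes `|W₁|, ..., |W_M|` and on
`(Wⱼ)_{j ∉ H}`, the null p-values at nonzero coordinates are i.i.d. fair coins: every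
assignment of `{pⱼ = 1/2}` vs `{pⱼ = 1}` to the nonzero null coordinates is equally
likely, jointly with any event in the conditioning σ-algebra. -/
theorem null_pvalues_conditionally_iid
    {Ω : Type*} [MeasurableSpace Ω] (μ : Measure Ω) [IsProbabilityMeasure μ]
    {M : ℕ} (W : Ω → Fin M → ℝ) (hW : Measurable W)
    (H : Finset (Fin M))
    (hflip : ∀ T : Finset (Fin M), T ⊆ H →
      Measure.map (fun ω => fun j => (if j ∈ T then (-1 : ℝ) else 1) * W ω j) μ =
        Measure.map W μ) :
    ∀ G : Set Ω,
      MeasurableSet[MeasurableSpace.comap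
        (fun ω => ((fun j => |W ω j|), (fun j : {j : Fin M // j ∉ H} => W ω j.val)))
        inferInstance] G →
      ∀ T T' : Finset (Fin M), T ⊆ H → T' ⊆ H →
        μ (G ∩ {ω | ∀ j ∈ H, W ω j ≠ 0 → (pval (W ω j) = 1/2 ↔ j ∈ T)}) =
        μ (G ∩ {ω | ∀ j ∈ H, W ω j ≠ 0 → (pval (W ω j) = 1/2 ↔ j ∈ T')}) := by
  intro G hG T T' hT hT'
  set U : Finset (Fin M) := symmDiff T T' with hU
  have hUH : U ⊆ H := by
    intro j hj
    rw [hU, Finset.mem_symmDiff] at hj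
    rcases hj with ⟨h1, _⟩ | ⟨h1, _⟩
    exacts [hT h1, hT' h1]
  set φ : (Fin M → ℝ) → (Fin M → ℝ) :=
    fun w j => (if j ∈ U then (-1 : ℝ) else 1) * w j with hφdef
  have hφ : Measurable φ :=
    measurable_pi_lambda _ fun j => (measurable_pi_apply j).const_mul _
  obtain ⟨B, hB, hGB⟩ := hG
  set g : (Fin M → ℝ) → ((Fin M → ℝ) × ({j : Fin M // j ∉ H} → ℝ)) :=
    fun w => (fun j => |w j|, fun j => w j.val) with hgdef
  have hg : Measurable g := by
    refine Measurable.prod ?_ ?_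
    · exact measurable_pi_lambda _ fun j => (measurable_pi_apply j).abs
    · exact measurable_pi_lambda _ fun j => measurable_pi_apply j.val
  have hgφ : ∀ w, g (φ w) = g w := by
    intro w
    simp only [hgdef, hφdef]
    refine Prod.ext ?_ ?_
    · funext j; by_cases h : j ∈ U <;> simp [h, abs_mul]
    · funext j
      have : j.val ∉ U := fun h => j.prop (hUH h)
      simp [this]
  set A : Finset (Fin M) → Set (Fin M → ℝ) := fun S =>
    {w | ∀ j ∈ H, w j ≠ 0 → (pval (w j) = 1/2 ↔ j ∈ S)} with hAdef
  have hAmeas : ∀ S : Finset (Fin M), MeasurableSet (A S) := by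
    intro S
    have hrw : A S = ⋂ j ∈ H,
        (fun w : Fin M → ℝ => w j) ⁻¹' {x : ℝ | x ≠ 0 → (pval x = 1/2 ↔ j ∈ S)} := by
      ext w; simp [hAdef]
    rw [hrw]
    refine MeasurableSet.biInter (Set.to_countable _) fun j _ => ?_
    refine (measurable_pi_apply j) ?_
    by_cases hjS : j ∈ S
    · have : {x : ℝ | x ≠ 0 → (pval x = 1/2 ↔ j ∈ S)} = {x : ℝ | 0 ≤ x} := by
        ext x
        simp only [Set.mem_setOf_eq, pval_eq_half_iff, hjS, iff_true]
        constructor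
        · intro h
          rcases eq_or_ne x 0 with h0 | h0
          · simp [h0]
          · exact (h h0).le
        · intro h h0; exact lt_of_le_of_ne h (Ne.symm h0)
      rw [this]; exact measurableSet_Ici
    · have : {x : ℝ | x ≠ 0 → (pval x = 1/2 ↔ j ∈ S)} = {x : ℝ | x ≤ 0} := by
        ext x
        simp only [Set.mem_setOf_eq, pval_eq_half_iff, hjS, iff_false]
        constructor
        · intro h
          rcases eq_or_ne x 0 with h0 | h0
          · simp [h0]
          · exact le_of_not_gt (h h0)
        · intro h h0 hx; exact h0 (le_antisymm h hx.le)
      rw [this]; exact measurableSet_Iic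
  have key : φ ⁻¹' (A T') = A T := by
    ext w
    simp only [hAdef, Set.mem_preimage, Set.mem_setOf_eq, hφdef]
    refine forall_congr' fun j => forall_congr' fun hj => ?_
    by_cases hjU : j ∈ U
    · have hTT' : j ∈ T' ↔ ¬ j ∈ T := by
        have := Finset.mem_symmDiff.mp (hU ▸ hjU)
        tauto
      simp only [hjU, if_true, neg_one_mul, neg_ne_zero, pval_eq_half_iff,
        neg_pos, hTT']
      constructor
      · intro h h0
        have := h h0
        rcases h0.lt_or_gt with hlt | hlt
        · simp [hlt, not_lt.mpr hlt.le] at this ⊢; tauto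
        · simp [hlt, not_lt.mpr hlt.le] at this ⊢; tauto
      · intro h h0
        have := h h0
        rcases h0.lt_or_gt with hlt | hlt
        · simp [hlt, not_lt.mpr hlt.le] at this ⊢; tauto
        · simp [hlt, not_lt.mpr hlt.le] at this ⊢; tauto
    · have hTT' : j ∈ T' ↔ j ∈ T := by
        have h := hjU
        rw [hU, Finset.mem_symmDiff] at h
        tauto
      simp [hjU, hTT']
  have hGW : G = W ⁻¹' (g ⁻¹' B) := by rw [← hGB]; rfl
  have hE : ∀ S : Finset (Fin M),
      {ω | ∀ j ∈ H, W ω j ≠ 0 → (pval (W ω j) = 1/2 ↔ j ∈ S)} = W ⁻¹' (A S) :=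
    fun S => rfl
  have hmap := hflip U hUH
  have hφW : (fun ω => fun j => (if j ∈ U then (-1 : ℝ) else 1) * W ω j) = φ ∘ W := rfl
  rw [hφW] at hmap
  have hgpre : φ ⁻¹' (g ⁻¹' B) = g ⁻¹' B := by
    ext w; simp only [Set.mem_preimage, hgφ w]
  have hm2 : MeasurableSet (g ⁻¹' B ∩ A T') := (hg hB).inter (hAmeas T')
  rw [hE, hE, hGW]
  calc μ (W ⁻¹' (g ⁻¹' B) ∩ W ⁻¹' (A T))
      = μ ((φ ∘ W) ⁻¹' (g ⁻¹' B ∩ A T')) := by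
        have h1 : φ ⁻¹' (g ⁻¹' B ∩ A T') = g ⁻¹' B ∩ A T := by
          rw [Set.preimage_inter, hgpre, key]
        rw [Set.preimage_comp, h1, Set.preimage_inter]
    _ = (Measure.map (φ ∘ W) μ) (g ⁻¹' B ∩ A T') :=
        (Measure.map_apply (hφ.comp hW) hm2).symm
    _ = (Measure.map W μ) (g ⁻¹' B ∩ A T') := by rw [hmap]
    _ = μ (W ⁻¹' (g ⁻¹' B ∩ A T')) := Measure.map_apply hW hm2
    _ = μ (W ⁻¹' (g ⁻¹' B) ∩ W ⁻¹' (A T')) := by rw [Set.preimage_inter]
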